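/- arXiv:2007.06248 — 2 statements merged into one kernel-verified Lean document; each statement's English description precedes it below -/
import Mathlib

section
/- Let σ, σ' be configurations of a threshold automaton such that steady reachability from σ to σ' is witnessed by the assignment Y = {y_r}_{r∈R}. Suppose σ.κ(ℓ) > 0 for a location ℓ and there is a fireable cycle t₁, …, t_m at ℓ with respect to Y. Then t₁ is enabled at σ, and steady reachability from t₁(σ) to σ' is witnessed by an assignment Z = {z_r}_{r∈R} with Σ_{r∈R} z_r < Σ_{r∈R} y_r. -/
/-!
Threshold automata (Konnov, Veith, Widder), following
"Complexity of Verification and Synthesis of Threshold Automata".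
-/

/-- A threshold guard `x ⋈ a₀ + a₁·p₁ + … + a_{|Π|}·p_{|Π|}` over shared variables `V` and
parameters `P`.  `isRise = true` means a *rise* guard `x ≥ …`, and `isRise = false` means a
*fall* guard `x < …`. -/
structure TGuard (V P : Type) where
  var : V
  isRise : Bool
  a0 : ℚ
  coef : P → ℚ

/-- A configuration `σ = (κ, g, p)`: numbers of processes in each location, values of the
shared variables, and values of the parameters. -/
structure Config (L V P : Type) where
  κ : L → ℕ
  g : V → ℕ
  p : P → ℕ

/-- A rule of a threshold automaton: source and target locations, a guard that is a
(finite) conjunction of threshold guards, and an update `V → {0,1}`. -/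
structure TRule (L V P : Type) where
  src : L
  dst : L
  guard : List (TGuard V P)
  upd : V → ℕ
  upd_le_one : ∀ v, upd v ≤ 1

/-- A threshold automaton `(L, I, Γ, R)` together with its environment `(Π, RC, N)`.
`L`, `V`, `P` are the types of locations, shared variables and parameters, and `R` is the
index type of rules. -/
structure TA (L V P R : Type) where
  initial : Set L
  initial_nonempty : initial.Nonempty
  rc : Set (P → ℕ)
  N : (P → ℕ) → ℕ
  rule : R → TRule L V P

variable {L V P R : Type}

/-- Satisfaction of a threshold guard by values `g` of the shared variables and `p` of the
parameters. -/
def TGuard.holds [Fintype P] (φ : TGuard V P) (g : V → ℕ) (p : P → ℕ) : Prop :=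
  if φ.isRise then φ.a0 + ∑ i : P, φ.coef i * (p i : ℚ) ≤ (g φ.var : ℚ)
  else (g φ.var : ℚ) < φ.a0 + ∑ i : P, φ.coef i * (p i : ℚ)

/-- A configuration enables a rule. -/
def TRule.enabledAt [Fintype P] (r : TRule L V P) (σ : Config L V P) : Prop :=
  0 < σ.κ r.src ∧ ∀ φ ∈ r.guard, φ.holds σ.g σ.p

/-- The result of firing a rule at a configuration. -/
def TRule.fire [DecidableEq L] (r : TRule L V P) (σ : Config L V P) : Config L V P where
  κ := fun ℓ => σ.κ ℓ + (if ℓ = r.dst then 1 else 0) - (if ℓ = r.src then 1 else 0)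
  g := fun v => σ.g v + r.upd v
  p := σ.p

namespace TA

variable [Fintype P] [DecidableEq L]

/-- `σ` is a configuration of `ta`: the parameters satisfy the resilience condition and the
total number of processes is `N(p)`. -/
def validConfig [Fintype L] (ta : TA L V P R) (σ : Config L V P) : Prop :=
  σ.p ∈ ta.rc ∧ ∑ ℓ : L, σ.κ ℓ = ta.N σ.p

/-- Initial configurations. -/
def isInitial [Fintype L] (ta : TA L V P R) (σ : Config L V P) : Prop :=
  ta.validConfig σ ∧ (∀ ℓ, ℓ ∉ ta.initial → σ.κ ℓ = 0) ∧ ∀ v, σ.g v = 0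

/-- A schedule (finite sequence of rules) is applicable to a configuration. -/
def applicable (ta : TA L V P R) : Config L V P → List R → Prop
  | _, [] => True
  | σ, r :: τ => (ta.rule r).enabledAt σ ∧ ta.applicable ((ta.rule r).fire σ) τ

/-- The configuration `τ(σ)` resulting from applying a schedule. -/
def apply (ta : TA L V P R) : Config L V P → List R → Config L V P
  | σ, [] => σ
  | σ, r :: τ => ta.apply ((ta.rule r).fire σ) τ

/-- The configurations visited by the path from `σ` along `τ` (including both endpoints). -/
def visited (ta : TA L V P R) : Config L V P → List R → List (Config L V P)
  | σ, [] => [σ]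
  | σ, r :: τ => σ :: ta.visited ((ta.rule r).fire σ) τ

/-- Reachability `σ →* σ'`. -/
def reaches (ta : TA L V P R) (σ σ' : Config L V P) : Prop :=
  ∃ τ : List R, ta.applicable σ τ ∧ ta.apply σ τ = σ'

/-- The set of all threshold guards occurring in rules of the automaton. -/
def guards (ta : TA L V P R) : Set (TGuard V P) :=
  {φ | ∃ r : R, φ ∈ (ta.rule r).guard}

/-- The context `ω(σ)`: rise guards of `ta` that are true in `σ` together with fall guards
of `ta` that are false in `σ`. -/
def context (ta : TA L V P R) (σ : Config L V P) : Set (TGuard V P) :=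
  {φ | φ ∈ ta.guards ∧ if φ.isRise then φ.holds σ.g σ.p else ¬ φ.holds σ.g σ.p}

/-- A schedule applicable at `σ` is steady if all configurations visited by the
corresponding path have the same context. -/
def steady (ta : TA L V P R) (σ : Config L V P) (τ : List R) : Prop :=
  ∀ σ' ∈ ta.visited σ τ, ta.context σ' = ta.context σ

end TA

/-- There is a chain of rules, all fired at least once according to `y`, starting at a
location populated in `σ` and leading to the rule `r`. -/
def TA.chainTo [Fintype P] (ta : TA L V P R) (y : R → ℕ) (σ : Config L V P) (r : R) : Prop :=
  ∃ (c : List R) (hne : c ≠ []),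
    (∀ r' ∈ c, 0 < y r') ∧
    0 < σ.κ (ta.rule (c.head hne)).src ∧
    List.Chain' (fun a b => (ta.rule a).dst = (ta.rule b).src) c ∧
    c.getLast hne = r

/-- The assignment `y : R → ℕ` witnesses steady reachability from `σ` to `σ'`. -/
def TA.witnessesSteady [Fintype P] [DecidableEq L] [Fintype R]
    (ta : TA L V P R) (σ σ' : Config L V P) (y : R → ℕ) : Prop :=
  σ.p = σ'.p ∧
  ta.context σ = ta.context σ' ∧
  (∀ ℓ : L, (σ'.κ ℓ : ℤ) - (σ.κ ℓ : ℤ) =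
      (∑ r : R, if (ta.rule r).dst = ℓ then (y r : ℤ) else 0) -
      (∑ r : R, if (ta.rule r).src = ℓ then (y r : ℤ) else 0)) ∧
  (∀ z : V, (σ'.g z : ℤ) - (σ.g z : ℤ) = ∑ r : R, (y r : ℤ) * ((ta.rule r).upd z : ℤ)) ∧
  (∀ r : R, 0 < y r → ∀ φ ∈ (ta.rule r).guard, φ.holds σ.g σ.p) ∧
  (∀ r : R, 0 < y r → ta.chainTo y σ r)

/-- A fireable cycle at location `ℓ` with respect to an assignment `y`: a sequence of rules,
all fired at least once according to `y`, consecutively linked, starting and ending at `ℓ`. -/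
def TA.fireableCycleAt (ta : TA L V P R) (y : R → ℕ) (ℓ : L) : Prop :=
  ∃ (c : List R) (hne : c ≠ []),
    (∀ r ∈ c, 0 < y r) ∧
    List.Chain' (fun a b => (ta.rule a).dst = (ta.rule b).src) c ∧
    (ta.rule (c.head hne)).src = ℓ ∧ (ta.rule (c.getLast hne)).dst = ℓ


/-!
Fire `t := t₁` and decrement `y t`. The flow and shared-variable equations survive by
linearity. Shared variables only grow, so `t(σ)` lies coordinatewise between `σ` and `σ'`; since
membership of a guard in the context is upward closed in the shared variables, `t(σ)` has the
context of `σ`, and so the guards stay true. For the chain condition, a path of rules of positive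
weight either keeps positive weight after the decrement, or its part after the last use of `t`
does, and that part starts at `t.to`, which `t(σ)` populates.
The only location `t(σ)` can empty is `t.from = ℓ`, and the rest of the cycle leads back to it
from `t.to` along rules that keep positive weight.
-/

open Relation

theorem Relation.ReflTransGen.mono_or_eq {α : Type*} {r s : α → α → Prop} {c : α}
    (h : ∀ a b, r a b → s a b ∨ b = c) {a b : α} (hab : ReflTransGen r a b) :
    ReflTransGen s a b ∨ ReflTransGen s c b := by
  induction hab with
  | refl => exact .inl .refl
  | tail _ hbd ih =>
    rcases h _ _ hbd with hs | rfl
    · exact ih.imp (·.tail hs) (·.tail hs)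
    · exact .inr .refl

/-- The condition defining membership in `TA.context` is the rise form `x ≥ …` for both kinds of
guard. -/
theorem TGuard.ite_holds_iff [Fintype P] (φ : TGuard V P) (g : V → ℕ) (p : P → ℕ) :
    (if φ.isRise then φ.holds g p else ¬ φ.holds g p) ↔
      φ.a0 + ∑ i : P, φ.coef i * (p i : ℚ) ≤ (g φ.var : ℚ) := by
  unfold TGuard.holds
  cases φ.isRise <;> simp

section Decrement

variable {ι : Type*} [Fintype ι] [DecidableEq ι] {y : ι → ℕ} {t : ι}

theorem Finset.sum_update_pred_mul (ht : 0 < y t) (f : ι → ℤ) :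
    ∑ r, (Function.update y t (y t - 1) r : ℤ) * f r = ∑ r, (y r : ℤ) * f r - f t := by
  have hpt : ∀ r, (Function.update y t (y t - 1) r : ℤ) * f r =
      (y r : ℤ) * f r - if r = t then f t else 0 := by
    intro r
    rcases eq_or_ne r t with rfl | hrt
    · simp only [Function.update_self, if_true]
      push_cast [Nat.one_le_iff_ne_zero.2 ht.ne']
      ring
    · simp [hrt]
  simp only [hpt, Finset.sum_sub_distrib, Finset.sum_ite_eq', Finset.mem_univ, if_true]

theorem Finset.sum_update_pred_lt (ht : 0 < y t) :
    ∑ r, Function.update y t (y t - 1) r < ∑ r, y r := by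
  have h := Finset.sum_update_pred_mul ht fun _ => 1
  simp only [mul_one] at h
  exact_mod_cast
    (by linarith : (∑ r, (Function.update y t (y t - 1) r : ℤ)) < ∑ r, (y r : ℤ))

theorem Finset.sum_ite_update_pred (ht : 0 < y t) (Q : ι → Prop) [DecidablePred Q] :
    ∑ r, (if Q r then (Function.update y t (y t - 1) r : ℤ) else 0) =
      (∑ r, if Q r then (y r : ℤ) else 0) - if Q t then 1 else 0 := by
  simpa only [mul_boole] using Finset.sum_update_pred_mul ht fun r => if Q r then 1 else 0

end Decrement

namespace TRule

variable [DecidableEq L] {r : TRule L V P} {σ : Config L V P}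

theorem fire_κ_cast (h : 0 < σ.κ r.src) (m : L) :
    ((r.fire σ).κ m : ℤ) =
      σ.κ m + (if r.dst = m then 1 else 0) - (if r.src = m then 1 else 0) := by
  have hle : (if r.src = m then 1 else 0) ≤ σ.κ m + (if r.dst = m then 1 else 0) := by
    split_ifs with hs <;> subst_vars <;> omega
  simp only [fire, eq_comm (a := m)]
  push_cast [hle]
  split_ifs <;> simp

theorem fire_κ_dst_pos (h : 0 < σ.κ r.src) : 0 < (r.fire σ).κ r.dst := by
  have := fire_κ_cast h r.dst
  by_cases hs : r.src = r.dst
  · rw [hs] at h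
    simp only [hs, if_true] at this
    omega
  · simp only [hs, if_true, if_false] at this
    omega

theorem κ_le_fire_κ {m : L} (hm : r.src ≠ m) : σ.κ m ≤ (r.fire σ).κ m := by
  simp only [fire, if_neg hm.symm]
  omega

end TRule

namespace TA

variable (ta : TA L V P R)

def supportAdj (y : R → ℕ) (a b : L) : Prop :=
  ∃ r, 0 < y r ∧ (ta.rule r).src = a ∧ (ta.rule r).dst = b

theorem context_subset_context [Fintype P] {σ σ' : Config L V P} (hp : σ.p = σ'.p)
    (hg : σ.g ≤ σ'.g) :
    ta.context σ ⊆ ta.context σ' := by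
  rintro φ ⟨hφ, hle⟩
  refine ⟨hφ, (φ.ite_holds_iff _ _).2 ?_⟩
  rw [TGuard.ite_holds_iff, hp] at hle
  exact hle.trans (by exact_mod_cast hg φ.var)

theorem context_eq_of_le_of_le [Fintype P] {σ₀ σ₁ σ₂ : Config L V P} (hp₁ : σ₀.p = σ₁.p)
    (hp₂ : σ₁.p = σ₂.p) (hg₁ : σ₀.g ≤ σ₁.g) (hg₂ : σ₁.g ≤ σ₂.g)
    (hctx : ta.context σ₀ = ta.context σ₂) : ta.context σ₁ = ta.context σ₀ :=
  (hctx ▸ ta.context_subset_context hp₂ hg₂).antisymm (ta.context_subset_context hp₁ hg₁)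

theorem holds_iff_of_context_eq [Fintype P] {σ σ' : Config L V P} {φ : TGuard V P}
    (hφ : φ ∈ ta.guards) (hctx : ta.context σ = ta.context σ') :
    φ.holds σ.g σ.p ↔ φ.holds σ'.g σ'.p := by
  have h := Set.ext_iff.1 hctx φ
  simp only [context, Set.mem_ofPred_eq, hφ, true_and] at h
  cases hR : φ.isRise <;> simp only [hR, if_true, Bool.false_eq_true, if_false] at h
  · exact not_iff_not.1 h
  · exact h

theorem supportAdj_update [DecidableEq R] {y : R → ℕ} {a b : L} (t : R) (n : ℕ)
    (h : ta.supportAdj y a b) :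
    ta.supportAdj (Function.update y t n) a b ∨ b = (ta.rule t).dst := by
  obtain ⟨r, hr, rfl, rfl⟩ := h
  by_cases hrt : r = t
  · exact .inr (hrt ▸ rfl)
  · exact .inl ⟨r, by rwa [Function.update_of_ne hrt], rfl, rfl⟩

theorem reflTransGen_src_of_isChain {y : R → ℕ} : ∀ {c : List R} (hne : c ≠ []),
    (∀ r ∈ c, 0 < y r) → c.IsChain (fun a b => (ta.rule a).dst = (ta.rule b).src) →
    ReflTransGen (ta.supportAdj y) (ta.rule (c.head hne)).src (ta.rule (c.getLast hne)).src
  | [_], _, _, _ => .refl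
  | a :: b :: l, _, hpos, hch => by
    rw [List.isChain_cons_cons] at hch
    exact .head ⟨a, hpos a (by simp), rfl, hch.1⟩
      (reflTransGen_src_of_isChain (List.cons_ne_nil b l) (fun r hr => hpos r (by simp [hr]))
        hch.2)

theorem reflTransGen_dst_of_isChain {y : R → ℕ} : ∀ {c : List R} (hne : c ≠ []),
    (∀ r ∈ c, 0 < y r) → c.IsChain (fun a b => (ta.rule a).dst = (ta.rule b).src) →
    ReflTransGen (ta.supportAdj y) (ta.rule (c.head hne)).dst (ta.rule (c.getLast hne)).dst
  | [_], _, _, _ => .refl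
  | a :: b :: l, _, hpos, hch => by
    rw [List.isChain_cons_cons] at hch
    exact .head ⟨b, hpos b (by simp), hch.1.symm, rfl⟩
      (reflTransGen_dst_of_isChain (List.cons_ne_nil b l) (fun r hr => hpos r (by simp [hr]))
        hch.2)

theorem chainTo_iff [Fintype P] {y : R → ℕ} {σ : Config L V P} {r : R} :
    ta.chainTo y σ r ↔
      0 < y r ∧ ∃ a, 0 < σ.κ a ∧ ReflTransGen (ta.supportAdj y) a (ta.rule r).src := by
  constructor
  · rintro ⟨c, hne, hpos, hκ, hch, rfl⟩
    exact ⟨hpos _ (List.getLast_mem hne), _, hκ, ta.reflTransGen_src_of_isChain hne hpos hch⟩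
  · rintro ⟨hr, a, hκ, hpath⟩
    suffices ∀ b, ReflTransGen (ta.supportAdj y) b (ta.rule r).src →
        ∃ (c : List R) (hne : c ≠ []), (∀ r' ∈ c, 0 < y r') ∧ (ta.rule (c.head hne)).src = b ∧
          c.IsChain (fun a b => (ta.rule a).dst = (ta.rule b).src) ∧ c.getLast hne = r by
      obtain ⟨c, hne, hpos, rfl, hch, hlast⟩ := this a hpath
      exact ⟨c, hne, hpos, hκ, hch, hlast⟩
    intro b hb
    induction hb using ReflTransGen.head_induction_on with
    | refl => exact ⟨[r], List.cons_ne_nil r [], by simpa, rfl, .singleton r, rfl⟩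
    | head hadj _ ih =>
      obtain ⟨s, hs, rfl, hsd⟩ := hadj
      obtain ⟨c, hne, hpos, hhead, hch, hlast⟩ := ih
      refine ⟨s :: c, List.cons_ne_nil s c, by simpa [hs] using hpos, rfl, ?_, ?_⟩
      · cases c with
        | nil => contradiction
        | cons b l => exact List.isChain_cons_cons.2 ⟨hsd.trans hhead.symm, hch⟩
      · rwa [List.getLast_cons hne]

variable [Fintype P] [DecidableEq L] [DecidableEq R] {σ σ' : Config L V P} {y : R → ℕ} {t : R}

theorem chainTo_fire {r : R} (hsrc : 0 < σ.κ (ta.rule t).src)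
    (hback : ReflTransGen (ta.supportAdj (Function.update y t (y t - 1)))
      (ta.rule t).dst (ta.rule t).src)
    (hr : 0 < Function.update y t (y t - 1) r) (hchain : ta.chainTo y σ r) :
    ta.chainTo (Function.update y t (y t - 1)) ((ta.rule t).fire σ) r := by
  obtain ⟨-, a, ha, hpath⟩ := ta.chainTo_iff.1 hchain
  refine ta.chainTo_iff.2 ⟨hr, ?_⟩
  rcases hpath.mono_or_eq fun _ _ => ta.supportAdj_update t (y t - 1) with hpath | hpath
  · by_cases hsa : (ta.rule t).src = a
    · exact ⟨_, TRule.fire_κ_dst_pos hsrc, hback.trans (hsa ▸ hpath)⟩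
    · exact ⟨a, ha.trans_le (TRule.κ_le_fire_κ hsa), hpath⟩
  · exact ⟨_, TRule.fire_κ_dst_pos hsrc, hpath⟩

theorem witnessesSteady_fire [Fintype R] (hw : ta.witnessesSteady σ σ' y) (ht : 0 < y t)
    (hsrc : 0 < σ.κ (ta.rule t).src)
    (hback : ReflTransGen (ta.supportAdj (Function.update y t (y t - 1)))
      (ta.rule t).dst (ta.rule t).src) :
    ta.witnessesSteady ((ta.rule t).fire σ) σ' (Function.update y t (y t - 1)) := by
  obtain ⟨hp, hctx, hflow, hvar, hguards, hchains⟩ := hw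
  have hzy : ∀ r, 0 < Function.update y t (y t - 1) r → 0 < y r := fun r hr =>
    hr.trans_le (by rcases eq_or_ne r t with rfl | hrt <;> simp [*])
  have hvar₁ : ∀ v, (σ'.g v : ℤ) - ((ta.rule t).fire σ).g v =
      ∑ r, (Function.update y t (y t - 1) r : ℤ) * (ta.rule r).upd v := by
    intro v
    rw [Finset.sum_update_pred_mul ht, ← hvar]
    simp only [TRule.fire]
    push_cast
    ring
  have hg₁ : σ.g ≤ ((ta.rule t).fire σ).g := fun v => Nat.le_add_right _ _
  have hg₂ : ((ta.rule t).fire σ).g ≤ σ'.g := fun v => by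
    have hdiff := hvar₁ v
    have hnonneg : 0 ≤ ∑ r, (Function.update y t (y t - 1) r : ℤ) * (ta.rule r).upd v := by
      positivity
    exact_mod_cast (by linarith : (((ta.rule t).fire σ).g v : ℤ) ≤ σ'.g v)
  have hctx₁ :=
    ta.context_eq_of_le_of_le (σ₀ := σ) (σ₁ := (ta.rule t).fire σ) rfl hp hg₁ hg₂ hctx
  refine ⟨hp, hctx₁.trans hctx, fun m => ?_, hvar₁, fun r hr φ hφ => ?_,
    fun r hr => ta.chainTo_fire hsrc hback hr (hchains r (hzy r hr))⟩
  · rw [Finset.sum_ite_update_pred ht, Finset.sum_ite_update_pred ht, TRule.fire_κ_cast hsrc]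
    linarith [hflow m]
  · exact (ta.holds_iff_of_context_eq ⟨r, hφ⟩ hctx₁.symm).1 (hguards r (hzy r hr) φ hφ)

end TA

theorem witness_decreases_with_cycle_general [Fintype P] [DecidableEq L] [Fintype R]
    (ta : TA L V P R) (σ σ' : Config L V P)
    (y : R → ℕ) (hw : ta.witnessesSteady σ σ' y)
    (ℓ : L) (hκ : 0 < σ.κ ℓ)
    (c : List R) (hne : c ≠ [])
    (hy : ∀ r ∈ c, 0 < y r)
    (hchain : List.Chain' (fun a b => (ta.rule a).dst = (ta.rule b).src) c)
    (hhead : (ta.rule (c.head hne)).src = ℓ)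
    (hlast : (ta.rule (c.getLast hne)).dst = ℓ) :
    (ta.rule (c.head hne)).enabledAt σ ∧
    ∃ z : R → ℕ, ta.witnessesSteady ((ta.rule (c.head hne)).fire σ) σ' z ∧
      ∑ r : R, z r < ∑ r : R, y r := by
  classical
  set t := c.head hne
  have hyt : 0 < y t := hy t (List.head_mem hne)
  have hsrc : 0 < σ.κ (ta.rule t).src := hhead ▸ hκ
  have hcycle : ReflTransGen (ta.supportAdj y) (ta.rule t).dst (ta.rule t).src := by
    rw [hhead, ← hlast]
    exact ta.reflTransGen_dst_of_isChain hne hy hchain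
  have hback : ReflTransGen (ta.supportAdj (Function.update y t (y t - 1)))
      (ta.rule t).dst (ta.rule t).src :=
    (hcycle.mono_or_eq fun _ _ => ta.supportAdj_update t (y t - 1)).elim id id
  have hguards := hw.2.2.2.2.1
  exact ⟨⟨hsrc, hguards t hyt⟩, _, ta.witnessesSteady_fire hw hyt hsrc hback,
    Finset.sum_update_pred_lt hyt⟩

/-- If `Y` witnesses steady reachability from `σ` to `σ'`, location `ℓ` satisfies
`σ.κ(ℓ) > 0` and `t₁, …, t_m` is a fireable cycle at `ℓ` with respect to `Y`, then `t₁` is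
enabled at `σ` and steady reachability from `t₁(σ)` to `σ'` is witnessed by an assignment
`Z` with `Σ_r z_r < Σ_r y_r`. -/
theorem witness_decreases_with_cycle [Fintype P] [DecidableEq L] [Fintype L] [Fintype R]
    (ta : TA L V P R) (σ σ' : Config L V P)
    (hσ : ta.validConfig σ) (hσ' : ta.validConfig σ')
    (y : R → ℕ) (hw : ta.witnessesSteady σ σ' y)
    (ℓ : L) (hκ : 0 < σ.κ ℓ)
    (c : List R) (hne : c ≠ [])
    (hy : ∀ r ∈ c, 0 < y r)
    (hchain : List.Chain' (fun a b => (ta.rule a).dst = (ta.rule b).src) c)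
    (hhead : (ta.rule (c.head hne)).src = ℓ)
    (hlast : (ta.rule (c.getLast hne)).dst = ℓ) :
    (ta.rule (c.head hne)).enabledAt σ ∧
    ∃ z : R → ℕ, ta.witnessesSteady ((ta.rule (c.head hne)).fire σ) σ' z ∧
      ∑ r : R, z r < ∑ r : R, y r :=
  witness_decreases_with_cycle_general ta σ σ' y hw ℓ hκ c hne hy hchain hhead hlast
end

section
/- Let TA be a threshold automaton, let Φ be its set of guards, and let K = |Φ| + 1. For all configurations σ, σ' of TA: σ →* σ' if and only if there exist configurations σ = σ₀, σ'₀, σ₁, σ'₁, …, σ_K, σ'_K = σ' such that for every 0 ≤ i ≤ K there is a steady schedule τ_i applicable to σ_i with τ_i(σ_i) = σ'_i, and for every 0 ≤ i < K either σ_{i+1} = σ'_i or σ_{i+1} = r(σ'_i) for some rule r enabled at σ'_i. -/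
variable {L V P R : Type}

/-!
Firing a rule only increases shared variables, so along any path the context grows
monotonically inside the finite set of guards `Φ`. Cutting a schedule at the (at most `|Φ|`)
rules that change the context leaves at most `|Φ| + 1` steady pieces; missing pieces are
padded with empty schedules.
-/

lemma Set.ncard_sdiff_lt_ncard_sdiff {α : Type*} {s t u : Set α} (hs : s.Finite) (htu : t ⊂ u)
    (hus : u ⊆ s) : (s \ u).ncard < (s \ t).ncard := by
  refine Set.ncard_lt_ncard ⟨Set.sdiff_subset_sdiff_right htu.subset, fun h => ?_⟩ hs.sdiff
  obtain ⟨x, hxu, hxt⟩ := Set.exists_of_ssubset htu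
  exact (h ⟨hus hxu, hxt⟩).2 hxu

namespace TA

variable (ta : TA L V P R)

lemma guards_finite [Finite R] : ta.guards.Finite :=
  (Set.finite_iUnion fun r => (ta.rule r).guard.finite_toSet).subset
    fun _ ⟨r, hr⟩ => Set.mem_iUnion.2 ⟨r, hr⟩

lemma apply_append [DecidableEq L] (σ : Config L V P) (τ₁ τ₂ : List R) :
    ta.apply σ (τ₁ ++ τ₂) = ta.apply (ta.apply σ τ₁) τ₂ := by
  induction τ₁ generalizing σ <;> simp [apply, *]

lemma context_subset_guards [Fintype P] (σ : Config L V P) : ta.context σ ⊆ ta.guards :=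
  fun _ h => h.1

lemma context_mono [Fintype P] {σ σ' : Config L V P} (hg : σ.g ≤ σ'.g) (hp : σ.p = σ'.p) :
    ta.context σ ⊆ ta.context σ' := by
  rintro φ ⟨hφ, hholds⟩
  have hvar : (σ.g φ.var : ℚ) ≤ σ'.g φ.var := by exact_mod_cast hg φ.var
  refine ⟨hφ, ?_⟩
  unfold TGuard.holds at hholds ⊢
  rw [← hp]
  cases hrise : φ.isRise <;> simp only [hrise, Bool.false_eq_true, if_true, if_false, not_lt]
    at hholds ⊢ <;> linarith

variable [Fintype P] [DecidableEq L]

lemma applicable_append (σ : Config L V P) (τ₁ τ₂ : List R) :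
    ta.applicable σ (τ₁ ++ τ₂) ↔ ta.applicable σ τ₁ ∧ ta.applicable (ta.apply σ τ₁) τ₂ := by
  induction τ₁ generalizing σ <;> simp [applicable, apply, *, and_assoc]

lemma reaches_refl (σ : Config L V P) : ta.reaches σ σ :=
  ⟨[], trivial, rfl⟩

lemma reaches_trans {σ₁ σ₂ σ₃ : Config L V P} (h₁₂ : ta.reaches σ₁ σ₂)
    (h₂₃ : ta.reaches σ₂ σ₃) : ta.reaches σ₁ σ₃ := by
  obtain ⟨τ₁, hτ₁, rfl⟩ := h₁₂
  obtain ⟨τ₂, hτ₂, rfl⟩ := h₂₃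
  exact ⟨τ₁ ++ τ₂, (ta.applicable_append σ₁ τ₁ τ₂).2 ⟨hτ₁, hτ₂⟩, ta.apply_append σ₁ τ₁ τ₂⟩

lemma context_subset_context_fire (r : TRule L V P) (σ : Config L V P) :
    ta.context σ ⊆ ta.context (r.fire σ) :=
  ta.context_mono (fun _ => Nat.le_add_right _ _) rfl

lemma ncard_guards_diff_context_fire_lt [Finite R] {r : TRule L V P} {σ : Config L V P}
    (hctx : ta.context (r.fire σ) ≠ ta.context σ) :
    (ta.guards \ ta.context (r.fire σ)).ncard < (ta.guards \ ta.context σ).ncard :=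
  Set.ncard_sdiff_lt_ncard_sdiff ta.guards_finite
    ((ta.context_subset_context_fire r σ).ssubset_of_ne (Ne.symm hctx))
    (ta.context_subset_guards _)

def SteadyReaches (σ σ' : Config L V P) : Prop :=
  ∃ τ : List R, ta.applicable σ τ ∧ ta.steady σ τ ∧ ta.apply σ τ = σ'

def AtMostOneStep (σ σ' : Config L V P) : Prop :=
  σ' = σ ∨ ∃ r : R, (ta.rule r).enabledAt σ ∧ (ta.rule r).fire σ = σ'

/-- `a i`, `b i` are the `σᵢ`, `σ'ᵢ` of the theorem, with `m + 1` steady pieces. -/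
def SteadySegments (σ σ' : Config L V P) (m : ℕ) : Prop :=
  ∃ a b : ℕ → Config L V P, a 0 = σ ∧ b m = σ' ∧
    (∀ i ≤ m, ta.SteadyReaches (a i) (b i)) ∧ ∀ i < m, ta.AtMostOneStep (b i) (a (i + 1))

lemma steadyReaches_refl (σ : Config L V P) : ta.SteadyReaches σ σ :=
  ⟨[], trivial, by simp [steady, visited], rfl⟩

variable {ta}

lemma SteadyReaches.cons {σ σ' : Config L V P} {r : R} (hr : (ta.rule r).enabledAt σ)
    (hctx : ta.context ((ta.rule r).fire σ) = ta.context σ)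
    (h : ta.SteadyReaches ((ta.rule r).fire σ) σ') : ta.SteadyReaches σ σ' := by
  obtain ⟨τ, happ, hsteady, rfl⟩ := h
  refine ⟨r :: τ, ⟨hr, happ⟩, ?_, rfl⟩
  rintro ρ (_ | ⟨_, hρ⟩)
  · rfl
  · rw [hsteady ρ hρ, hctx]

lemma SteadyReaches.reaches {σ σ' : Config L V P} (h : ta.SteadyReaches σ σ') :
    ta.reaches σ σ' :=
  let ⟨τ, happ, _, hτ⟩ := h
  ⟨τ, happ, hτ⟩

lemma AtMostOneStep.reaches {σ σ' : Config L V P} (h : ta.AtMostOneStep σ σ') :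
    ta.reaches σ σ' := by
  rcases h with rfl | ⟨r, hr, hfire⟩
  · exact ta.reaches_refl _
  · exact ⟨[r], ⟨hr, trivial⟩, hfire⟩

lemma steadySegments_zero_of_steadyReaches {σ σ' : Config L V P}
    (h : ta.SteadyReaches σ σ') : ta.SteadySegments σ σ' 0 :=
  ⟨fun _ => σ, fun _ => σ', rfl, rfl, fun i hi => by rwa [Nat.le_zero.1 hi], nofun⟩

lemma SteadySegments.cons {σ ρ ρ' σ' : Config L V P} {m : ℕ} (hσρ : ta.SteadyReaches σ ρ)
    (hρρ' : ta.AtMostOneStep ρ ρ') (h : ta.SteadySegments ρ' σ' m) :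
    ta.SteadySegments σ σ' (m + 1) := by
  obtain ⟨a, b, rfl, rfl, hsteady, hstep⟩ := h
  refine ⟨fun | 0 => σ | i + 1 => a i, fun | 0 => ρ | i + 1 => b i, rfl, rfl, ?_, ?_⟩
  · rintro (_ | i) hi
    exacts [hσρ, hsteady i (by omega)]
  · rintro (_ | i) hi
    exacts [hρρ', hstep i (by omega)]

lemma SteadySegments.cons_steady {σ σ' : Config L V P} {r : R} {m : ℕ}
    (hr : (ta.rule r).enabledAt σ) (hctx : ta.context ((ta.rule r).fire σ) = ta.context σ)
    (h : ta.SteadySegments ((ta.rule r).fire σ) σ' m) : ta.SteadySegments σ σ' m := by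
  obtain ⟨a, b, ha, rfl, hsteady, hstep⟩ := h
  refine ⟨fun | 0 => σ | i + 1 => a (i + 1), b, rfl, rfl, ?_, hstep⟩
  rintro (_ | i) hi
  exacts [(ha ▸ hsteady 0 hi).cons hr hctx, hsteady (i + 1) hi]

lemma SteadySegments.mono {σ σ' : Config L V P} {m n : ℕ} (hmn : m ≤ n)
    (h : ta.SteadySegments σ σ' m) : ta.SteadySegments σ σ' n := by
  induction hmn with
  | refl => exact h
  | step _ ih => exact ih.cons (ta.steadyReaches_refl σ) (Or.inl rfl)

lemma SteadySegments.reaches {σ σ' : Config L V P} {m : ℕ} (h : ta.SteadySegments σ σ' m) :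
    ta.reaches σ σ' := by
  obtain ⟨a, b, rfl, rfl, hsteady, hstep⟩ := h
  suffices ∀ i ≤ m, ta.reaches (a 0) (b i) from this m le_rfl
  intro i hi
  induction i with
  | zero => exact (hsteady 0 hi).reaches
  | succ i ih =>
    exact ta.reaches_trans (ta.reaches_trans (ih (by omega)) (hstep i hi).reaches)
      (hsteady (i + 1) hi).reaches

variable (ta)

lemma exists_steadySegments_of_applicable [Finite R] (τ : List R) {σ : Config L V P}
    (hτ : ta.applicable σ τ) :
    ∃ m ≤ (ta.guards \ ta.context σ).ncard, ta.SteadySegments σ (ta.apply σ τ) m := by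
  induction τ generalizing σ with
  | nil => exact ⟨0, Nat.zero_le _, steadySegments_zero_of_steadyReaches (ta.steadyReaches_refl σ)⟩
  | cons r τ ih =>
    obtain ⟨hr, hτ⟩ := hτ
    obtain ⟨m, hm, hseg⟩ := ih hτ
    by_cases hctx : ta.context ((ta.rule r).fire σ) = ta.context σ
    · exact ⟨m, hctx ▸ hm, hseg.cons_steady hr hctx⟩
    · exact ⟨m + 1, (ta.ncard_guards_diff_context_fire_lt hctx).trans_le' (by omega),
        hseg.cons (ta.steadyReaches_refl σ) (Or.inr ⟨r, hr, rfl⟩)⟩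

lemma reaches_iff_steadySegments [Finite R] {σ σ' : Config L V P} {K : ℕ}
    (hK : ta.guards.ncard < K) : ta.reaches σ σ' ↔ ta.SteadySegments σ σ' K := by
  refine ⟨?_, SteadySegments.reaches⟩
  rintro ⟨τ, hτ, rfl⟩
  obtain ⟨m, hm, hseg⟩ := ta.exists_steadySegments_of_applicable τ hτ
  have := Set.ncard_le_ncard (Set.sdiff_subset (t := ta.context σ)) ta.guards_finite
  exact hseg.mono (by omega)

end TA

theorem reaches_iff_steady_segments_general [Fintype P] [DecidableEq L] [Fintype R]
    (ta : TA L V P R) (K : ℕ) (hK : K = ta.guards.ncard + 1)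
    (σ σ' : Config L V P) :
    ta.reaches σ σ' ↔
    ∃ a b : ℕ → Config L V P,
      a 0 = σ ∧ b K = σ' ∧
      (∀ i ≤ K, ∃ τ : List R,
        ta.applicable (a i) τ ∧ ta.steady (a i) τ ∧ ta.apply (a i) τ = b i) ∧
      (∀ i < K, a (i + 1) = b i ∨
        ∃ r : R, (ta.rule r).enabledAt (b i) ∧ (ta.rule r).fire (b i) = a (i + 1)) :=
  ta.reaches_iff_steadySegments (by omega)

/-- Let `Φ` be the set of guards of `TA` and `K = |Φ| + 1`.  Then `σ →* σ'` iff there are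
configurations `σ = σ₀, σ'₀, σ₁, σ'₁, …, σ_K, σ'_K = σ'` such that every `σ'ᵢ` is reached
from `σᵢ` by a steady schedule, and every `σ_{i+1}` is obtained from `σ'ᵢ` by firing at most
one rule. -/
theorem reaches_iff_steady_segments [Fintype P] [DecidableEq L] [Fintype L] [Fintype R]
    (ta : TA L V P R) (K : ℕ) (hK : K = ta.guards.ncard + 1)
    (σ σ' : Config L V P) (hσ : ta.validConfig σ) (hσ' : ta.validConfig σ') :
    ta.reaches σ σ' ↔
    ∃ a b : ℕ → Config L V P,
      a 0 = σ ∧ b K = σ' ∧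
      (∀ i ≤ K, ∃ τ : List R,
        ta.applicable (a i) τ ∧ ta.steady (a i) τ ∧ ta.apply (a i) τ = b i) ∧
      (∀ i < K, a (i + 1) = b i ∨
        ∃ r : R, (ta.rule r).enabledAt (b i) ∧ (ta.rule r).fire (b i) = a (i + 1)) :=
  reaches_iff_steady_segments_general ta K hK σ σ'
end
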